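/- arXiv:2011.04478 — 5 statements merged into one kernel-verified Lean document; each statement's English description precedes it below -/
import Mathlib

section
/- Fix k ∈ ℕ, real numbers α₁ > α₂ > ⋯ > α_p, and positive integers m₁,…,m_p with m₁ + ⋯ + m_p = k. For any vector z = (z₁,…,z_k) ∈ ℝ^k with all entries distinct, the k×k determinant whose rows are grouped into blocks, the ℓ-th block consisting of the rows ( z_j^{i−1} e^{α_ℓ z_j} )_{j=1,…,k} for i = 1,…,m_ℓ, is nonzero. -/
/-!
A nonzero vector in the left kernel of the matrix yields polynomials `Pₗ` with `deg Pₗ < mₗ`, not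
all zero, such that `f x = ∑ₗ Pₗ(x) e^{αₗ x}` vanishes at the `k = ∑ mₗ` distinct points `z_j`.
Such an `f` has fewer than `∑ mₗ` zeros unless all `Pₗ` vanish. Induct on `∑ mₗ`: for some `ℓ₀`
with `m_{ℓ₀} > 0`, the derivative of `e^{-α_{ℓ₀} x} f x` is again of this shape, with `m_{ℓ₀}`
lowered by one, and by Rolle it loses at most one zero. If that derivative is identically zero,
then `Pₗ' + (αₗ - α_{ℓ₀}) Pₗ = 0` forces `Pₗ = 0` for `ℓ ≠ ℓ₀`, and `P_{ℓ₀}` is a constant that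
must vanish at a zero of `f`.
-/

open Finset Function Polynomial

theorem Real.exists_finset_deriv_eq_zero {f : ℝ → ℝ} (hf : Differentiable ℝ f) {s : Finset ℝ}
    (hs : ∀ x ∈ s, f x = 0) : ∃ t : Finset ℝ, (∀ x ∈ t, deriv f x = 0) ∧ #s ≤ #t + 1 := by
  have rolle (q : ℝ × ℝ) :
      ∃ c, q.1 < q.2 → f q.1 = f q.2 → c ∈ Set.Ioo q.1 q.2 ∧ deriv f c = 0 := by
    by_cases hq : q.1 < q.2 ∧ f q.1 = f q.2
    · obtain ⟨c, hc, hc'⟩ := exists_deriv_eq_zero hq.1 hf.continuous.continuousOn hq.2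
      exact ⟨c, fun _ _ => ⟨hc, hc'⟩⟩
    · exact ⟨0, fun h₁ h₂ => (hq ⟨h₁, h₂⟩).elim⟩
  choose c hc using rolle
  classical
  refine ⟨((s ×ˢ s).filter fun q => q.1 < q.2).image c, ?_, ?_⟩
  · simp only [mem_image, mem_filter, mem_product]
    rintro _ ⟨q, ⟨⟨hq₁, hq₂⟩, hlt⟩, rfl⟩
    exact (hc q hlt ((hs _ hq₁).trans (hs _ hq₂).symm)).2
  · refine card_le_of_interleaved fun x hx y hy hxy _ => ?_
    obtain ⟨hmem, -⟩ := hc (x, y) hxy ((hs x hx).trans (hs y hy).symm)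
    exact ⟨c (x, y), mem_image_of_mem _ (by simp [hx, hy, hxy]), hmem⟩

namespace Polynomial

variable {R : Type*} [Semiring R]

theorem degree_derivative_lt_sub_one {P : R[X]} {n : ℕ} (hP : P.degree < n) :
    (derivative P).degree < ↑(n - 1) := by
  rw [degree_lt_iff_coeff_zero] at hP ⊢
  intro k hk
  rw [coeff_derivative, hP (k + 1) (by omega), zero_mul]

theorem degree_derivative_add_C_mul_lt {P : R[X]} {n : ℕ} (hP : P.degree < n) (c : R) :
    (derivative P + C c * P).degree < n := by
  rw [C_mul']
  exact (degree_add_le _ _).trans_lt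
    (max_lt (degree_derivative_le.trans_lt hP) ((degree_smul_le c P).trans_lt hP))

theorem eq_zero_of_derivative_add_C_mul_eq_zero {P : ℝ[X]} {c : ℝ} (hc : c ≠ 0)
    (h : derivative P + C c * P = 0) : P = 0 := by
  have hlead := congrArg (coeff · P.natDegree) h
  simp only [coeff_add, coeff_derivative, coeff_C_mul, coeff_natDegree_succ_eq_zero, coeff_zero,
    zero_mul, zero_add, mul_eq_zero, hc, false_or] at hlead
  exact leadingCoeff_eq_zero.1 hlead

end Polynomial

section ExpPoly

variable {ι : Type*} {m : ι → ℕ}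

noncomputable def blockPoly (v : (Σ ℓ, Fin (m ℓ)) → ℝ) (ℓ : ι) : ℝ[X] :=
  ∑ i : Fin (m ℓ), C (v ⟨ℓ, i⟩) * X ^ (i : ℕ)

theorem degree_blockPoly_lt (v : (Σ ℓ, Fin (m ℓ)) → ℝ) (ℓ : ι) :
    (blockPoly v ℓ).degree < m ℓ :=
  degree_sum_fin_lt _

theorem coeff_blockPoly (v : (Σ ℓ, Fin (m ℓ)) → ℝ) (r : Σ ℓ, Fin (m ℓ)) :
    (blockPoly v r.1).coeff r.2 = v r := by
  simp [blockPoly, Fin.val_inj]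

variable [Fintype ι]

noncomputable def expPoly (α : ι → ℝ) (P : ι → ℝ[X]) (x : ℝ) : ℝ :=
  ∑ ℓ, (P ℓ).eval x * Real.exp (α ℓ * x)

theorem hasDerivAt_expPoly (α : ι → ℝ) (P : ι → ℝ[X]) (x : ℝ) :
    HasDerivAt (expPoly α P) (expPoly α (fun ℓ => derivative (P ℓ) + C (α ℓ) * P ℓ) x) x := by
  unfold expPoly
  refine HasDerivAt.fun_sum fun ℓ _ => ?_
  have hexp : HasDerivAt (fun y => Real.exp (α ℓ * y)) (Real.exp (α ℓ * x) * α ℓ) x :=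
    ((hasDerivAt_id x).const_mul (α ℓ)).exp.congr_deriv (by simp)
  refine (((P ℓ).hasDerivAt x).fun_mul hexp).congr_deriv ?_
  simp only [eval_add, eval_mul, eval_C]
  ring

theorem expPoly_sub_const (α : ι → ℝ) (P : ι → ℝ[X]) (a x : ℝ) :
    expPoly (fun ℓ => α ℓ - a) P x = Real.exp (-(a * x)) * expPoly α P x := by
  simp only [expPoly, mul_sum]
  exact sum_congr rfl fun _ _ => by rw [sub_mul, sub_eq_add_neg, Real.exp_add]; ring

theorem eq_zero_of_expPoly_eq_zero_of_sum_le_card {α : ι → ℝ} (hα : Injective α)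
    {P : ι → ℝ[X]} (hP : ∀ ℓ, (P ℓ).degree < m ℓ) {s : Finset ℝ} (hs : ∑ ℓ, m ℓ ≤ #s)
    (hzero : ∀ x ∈ s, expPoly α P x = 0) : P = 0 := by
  induction h : ∑ ℓ, m ℓ generalizing α m P s with
  | zero =>
    funext ℓ
    ext k
    have hm : m ℓ = 0 := sum_eq_zero_iff.1 h ℓ (mem_univ _)
    exact (degree_lt_iff_coeff_zero _ _).1 (hm ▸ hP ℓ) k (Nat.zero_le k)
  | succ n ih =>
    classical
    obtain ⟨ℓ₀, hℓ₀⟩ : ∃ ℓ₀, m ℓ₀ ≠ 0 := by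
      by_contra! hm
      simp [hm] at h
    set β : ι → ℝ := fun ℓ => α ℓ - α ℓ₀
    set Q : ι → ℝ[X] := fun ℓ => derivative (P ℓ) + C (β ℓ) * P ℓ
    have hQ_degree (ℓ : ι) : (Q ℓ).degree < update m ℓ₀ (m ℓ₀ - 1) ℓ := by
      rcases eq_or_ne ℓ ℓ₀ with rfl | hℓ
      · simpa [Q, β] using degree_derivative_lt_sub_one (hP ℓ)
      · simpa [update_of_ne hℓ] using degree_derivative_add_C_mul_lt (hP ℓ) (β ℓ)
    have hQ_sum : ∑ ℓ, update m ℓ₀ (m ℓ₀ - 1) ℓ = n := by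
      have := add_sum_erase univ m (mem_univ ℓ₀)
      rw [sum_update_of_mem (mem_univ _), sdiff_singleton_eq_erase]
      omega
    obtain ⟨t, ht, hst⟩ := Real.exists_finset_deriv_eq_zero
      (fun x => (hasDerivAt_expPoly β P x).differentiableAt)
      (fun x hx => by rw [expPoly_sub_const, hzero x hx, mul_zero])
    have hQ : Q = 0 := ih (fun a b hab => hα (sub_left_injective hab)) hQ_degree (by omega)
      (fun x hx => (hasDerivAt_expPoly β P x).deriv ▸ ht x hx) hQ_sum
    have hP_ne (ℓ : ι) (hℓ : ℓ ≠ ℓ₀) : P ℓ = 0 :=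
      eq_zero_of_derivative_add_C_mul_eq_zero (sub_ne_zero.2 (hα.ne hℓ)) (congrFun hQ ℓ)
    have hP₀ : P ℓ₀ = C ((P ℓ₀).coeff 0) :=
      eq_C_of_derivative_eq_zero (by simpa [Q, β] using congrFun hQ ℓ₀)
    obtain ⟨x, hx⟩ : s.Nonempty := card_pos.1 (by omega)
    have hc : (P ℓ₀).coeff 0 = 0 := by
      have hx := hzero x hx
      rw [expPoly, sum_eq_single ℓ₀ (fun ℓ _ hℓ => by simp [hP_ne ℓ hℓ]) (by simp), hP₀, eval_C]
        at hx
      exact (mul_eq_zero.1 hx).resolve_right (Real.exp_ne_zero _)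
    funext ℓ
    by_cases hℓ : ℓ = ℓ₀
    · rw [hℓ, hP₀, hc, C_0, Pi.zero_apply]
    · exact hP_ne ℓ hℓ

theorem expPoly_blockPoly (α : ι → ℝ) (v : (Σ ℓ, Fin (m ℓ)) → ℝ) (x : ℝ) :
    expPoly α (blockPoly v) x = ∑ r, v r * (x ^ (r.2 : ℕ) * Real.exp (α r.1 * x)) := by
  simp only [expPoly, blockPoly, eval_finsetSum, eval_mul, eval_C, eval_pow, eval_X, sum_mul,
    Fintype.sum_sigma, mul_assoc]

end ExpPoly

theorem stmt6_general (p : ℕ) (m : Fin p → ℕ)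
    (α : Fin p → ℝ) (hα : StrictAnti α)
    (z : (Σ ℓ : Fin p, Fin (m ℓ)) → ℝ) (hz : Function.Injective z) :
    Matrix.det (Matrix.of fun r c : (Σ ℓ : Fin p, Fin (m ℓ)) =>
      z c ^ (r.2 : ℕ) * Real.exp (α r.1 * z c)) ≠ 0 := by
  classical
  intro hdet
  obtain ⟨v, hv, hvM⟩ := Matrix.exists_vecMul_eq_zero_iff.2 hdet
  have hzero : ∀ x ∈ univ.image z, expPoly α (blockPoly v) x = 0 := by
    simp only [mem_image, mem_univ, true_and, forall_exists_index, forall_apply_eq_imp_iff]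
    intro c
    rw [expPoly_blockPoly]
    exact congrFun hvM c
  have hcard : ∑ ℓ, m ℓ ≤ #(univ.image z) := by
    rw [card_image_of_injective _ hz, card_univ, Fintype.card_sigma]
    simp
  have hP := eq_zero_of_expPoly_eq_zero_of_sum_le_card hα.injective (degree_blockPoly_lt v)
    hcard hzero
  exact hv (funext fun r => by simpa [hP] using (coeff_blockPoly v r).symm)

/-- the block determinant with rows `z_j^{i-1} e^{α_ℓ z_j}` (block `ℓ` of
size `m_ℓ`, `i = 1,…,m_ℓ`) is nonzero whenever the points `z` are distinct and the
exponents `α₁ > ⋯ > α_p` are distinct. Rows and columns are indexed by the pairs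
`(ℓ, i)` with `ℓ : Fin p`, `i : Fin (m ℓ)` (a set of cardinality `k = Σ m_ℓ`). -/
theorem stmt6 (p : ℕ) (m : Fin p → ℕ) (hm : ∀ ℓ, 0 < m ℓ)
    (α : Fin p → ℝ) (hα : StrictAnti α)
    (z : (Σ ℓ : Fin p, Fin (m ℓ)) → ℝ) (hz : Function.Injective z) :
    Matrix.det (Matrix.of fun r c : (Σ ℓ : Fin p, Fin (m ℓ)) =>
      z c ^ (r.2 : ℕ) * Real.exp (α r.1 * z c)) ≠ 0 :=
  stmt6_general p m α hα z hz
end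

section
/- Fix p ∈ (0,1) and R > 0. Suppose x ∈ [−R, R] and N = pn + √n·x ∈ [0,n] is an integer. Then the binomial coefficient satisfies C(n,N) = (2π)^{−1/2} exp( −x²/(2p(1−p)) ) · exp( N log((1−p)/p) − n log(1−p) − (1/2) log n − (1/2) log(p(1−p)) ) · exp( O(n^{−1/2}) ), where the implied constant in O(n^{−1/2}) depends only on p and R. -/
/-!
Write `N = pn + t` with `t = √n x`. Stirling's formula with remainder in `[0, 1/(12m)]` gives
`log C(n,N) = (n+½) log n - (N+½) log N - (n-N+½) log (n-N) - ½ log 2π + O(1/n)`.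
Split `log N = log (pn) + log (1 + t/(pn))` and `log (n-N) = log ((1-p)n) + log (1 - t/((1-p)n))`.
The `log p`, `log (1-p)`, `log n` parts give the second exponential, while the expansion
`(a + t + ½) log (1 + t/a) = t + t²/(2a) + O(|t|³/a² + |t|/a)` for `a = pn` and `a = (1-p)n`
gives `t²/(2pn) + t²/(2(1-p)n) = x²/(2p(1-p))`, the linear terms `±t` cancelling.
All errors are `O(1/√n)` because `|t| ≤ R√n`.
-/

open Real Filter Topology Stirling
open scoped Nat

namespace Stirling

noncomputable def stirlingRemainder (n : ℕ) : ℝ :=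
  log n ! - (n * log n - n + log n / 2 + log (2 * π) / 2)

lemma stirlingRemainder_nonneg {n : ℕ} (hn : n ≠ 0) : 0 ≤ stirlingRemainder n := by
  have := le_log_factorial_stirling hn
  unfold stirlingRemainder
  linarith

lemma stirlingRemainder_eq_log_stirlingSeq_sub {n : ℕ} (hn : n ≠ 0) :
    stirlingRemainder n = log (stirlingSeq n) - log √π := by
  have hn' : (0 : ℝ) < n := by positivity
  rw [stirlingRemainder, log_stirlingSeq_formula, log_sqrt pi_pos.le, log_mul two_ne_zero hn'.ne',
    log_div hn'.ne' (exp_pos 1).ne', log_exp, log_mul two_ne_zero pi_pos.ne']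
  ring

-- Robbins' bound `log sₖ - log sₖ₊₁ ≤ 1/(12k) - 1/(12(k+1))` makes `log sₖ - 1/(12k)` increase
-- to `log √π`.
lemma stirlingRemainder_le {n : ℕ} (hn : n ≠ 0) : stirlingRemainder n ≤ 1 / (12 * n) := by
  set g : ℕ → ℝ := fun k => log (stirlingSeq (k + 1)) - 1 / ((k : ℝ) + 1) / 12
  have hmono : Monotone g := monotone_nat_of_le_succ fun k => by
    have hk := log_stirlingSeq_sdiff_le (k + 1)
    have htel : 1 / (12 * ((k + 1 : ℕ) : ℝ) * ((k + 1 : ℕ) + 1))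
        = 1 / ((k : ℝ) + 1) / 12 - 1 / (((k + 1 : ℕ) : ℝ) + 1) / 12 := by
      push_cast; field_simp; ring
    simp only [g]
    push_cast at hk htel ⊢
    linarith
  have hlim : Tendsto g atTop (𝓝 (log √π)) := by
    have := ((tendsto_stirlingSeq_sqrt_pi.comp (tendsto_add_atTop_nat 1)).log (by positivity)).sub
      (tendsto_one_div_add_atTop_nhds_zero_nat.div_const 12)
    rwa [zero_div, sub_zero] at this
  obtain ⟨k, rfl⟩ := Nat.exists_eq_succ_of_ne_zero hn
  have := hmono.ge_of_tendsto hlim k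
  rw [stirlingRemainder_eq_log_stirlingSeq_sub hn]
  simp only [g] at this
  push_cast
  field_simp at this ⊢
  linarith

end Stirling

lemma abs_log_one_add_le {u : ℝ} (hu : |u| ≤ 1 / 4) : |log (1 + u)| ≤ 2 * |u| := by
  have h := abs_log_sub_add_sum_range_le (x := -u) (by rw [abs_neg]; linarith) 0
  rw [abs_neg, Finset.sum_range_zero, zero_add, sub_neg_eq_add] at h
  refine h.trans ?_
  rw [zero_add, pow_one, div_le_iff₀ (by linarith)]
  nlinarith [abs_nonneg u]

lemma abs_log_one_add_sub_le {u : ℝ} (hu : |u| ≤ 1 / 4) :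
    |log (1 + u) - (u - u ^ 2 / 2)| ≤ 2 * |u| ^ 3 := by
  have h := abs_log_sub_add_sum_range_le (x := -u) (by rw [abs_neg]; linarith) 2
  have hsum : ∑ i ∈ Finset.range 2, (-u) ^ (i + 1) / ((i : ℝ) + 1) = -(u - u ^ 2 / 2) := by
    simp [Finset.sum_range_succ]; ring
  rw [hsum, abs_neg, sub_neg_eq_add, neg_add_eq_sub] at h
  refine h.trans ?_
  show |u| ^ 3 / (1 - |u|) ≤ _
  rw [div_le_iff₀ (by linarith)]
  nlinarith [pow_nonneg (abs_nonneg u) 3]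

lemma abs_one_add_mul_log_one_add_sub_le {u : ℝ} (hu : |u| ≤ 1 / 4) :
    |(1 + u) * log (1 + u) - (u + u ^ 2 / 2)| ≤ 3 * |u| ^ 3 := by
  have htaylor := abs_log_one_add_sub_le hu
  have hu1 : |1 + u| ≤ 5 / 4 := (abs_add_le 1 u).trans (by rw [abs_one]; linarith)
  calc |(1 + u) * log (1 + u) - (u + u ^ 2 / 2)|
      = |(1 + u) * (log (1 + u) - (u - u ^ 2 / 2)) - u ^ 3 / 2| := by ring_nf
    _ ≤ |1 + u| * |log (1 + u) - (u - u ^ 2 / 2)| + |u| ^ 3 / 2 := by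
      grw [abs_sub, abs_mul, abs_div, abs_pow, abs_two]
    _ ≤ 5 / 4 * (2 * |u| ^ 3) + |u| ^ 3 / 2 := by gcongr
    _ = 3 * |u| ^ 3 := by ring

lemma abs_add_half_mul_log_one_add_div_sub_le {a t : ℝ} (ha : 0 < a) (ht : |t| ≤ a / 4) :
    |(a + t + 1 / 2) * log (1 + t / a) - (t + t ^ 2 / (2 * a))|
      ≤ 3 * |t| ^ 3 / a ^ 2 + |t| / a := by
  have hu : |t / a| ≤ 1 / 4 := by
    rw [abs_div, abs_of_pos ha, div_le_iff₀ ha]; linarith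
  have hmain := abs_one_add_mul_log_one_add_sub_le hu
  have hlog := abs_log_one_add_le hu
  have hsplit : (a + t + 1 / 2) * log (1 + t / a) - (t + t ^ 2 / (2 * a))
      = a * ((1 + t / a) * log (1 + t / a) - (t / a + (t / a) ^ 2 / 2)) + log (1 + t / a) / 2 := by
    field_simp; ring
  rw [hsplit]
  calc _ ≤ a * (3 * |t / a| ^ 3) + 2 * |t / a| / 2 := by
        grw [abs_add_le, abs_mul, abs_of_pos ha, abs_div _ (2 : ℝ), abs_two, hmain, hlog]
    _ = 3 * |t| ^ 3 / a ^ 2 + |t| / a := by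
        rw [abs_div, abs_of_pos ha]; field_simp

lemma log_choose_eq {n N : ℕ} (hNn : N ≤ n) :
    log (n.choose N) = (n + 1 / 2) * log n - (N + 1 / 2) * log N
      - ((n - N : ℕ) + 1 / 2) * log (n - N : ℕ) - log (2 * π) / 2
      + (stirlingRemainder n - stirlingRemainder N - stirlingRemainder (n - N)) := by
  have hn : (n : ℝ) = N + (n - N : ℕ) := by rw [Nat.cast_sub hNn]; ring
  rw [Nat.cast_choose ℝ hNn, log_div (by positivity) (by positivity),
    log_mul (by positivity) (by positivity)]
  simp only [stirlingRemainder]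
  rw [hn]
  ring

lemma log_add_eq_log_add_log_one_add_div {a t : ℝ} (ha : 0 < a) (hat : 0 < a + t) :
    log (a + t) = log a + log (1 + t / a) := by
  have h : 1 + t / a = (a + t) / a := by field_simp
  rw [h, log_div hat.ne' ha.ne']
  ring

lemma abs_log_choose_sub_gaussian_le {n N : ℕ} {p t : ℝ} (hp : p ∈ Set.Ioo 0 1) (hn : 0 < n)
    (hNn : N ≤ n) (hN : (N : ℝ) = p * n + t) (htp : |t| ≤ p * n / 4) (htq : |t| ≤ (1 - p) * n / 4) :
    |log (n.choose N) - (N * log ((1 - p) / p) - n * log (1 - p) - (1 / 2) * log n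
        - (1 / 2) * log (p * (1 - p)) - log (2 * π) / 2 - t ^ 2 / (2 * p * (1 - p) * n))|
      ≤ 1 / n + (1 / (p * n) + 3 * |t| ^ 3 / (p * n) ^ 2 + |t| / (p * n))
        + (1 / ((1 - p) * n) + 3 * |t| ^ 3 / ((1 - p) * n) ^ 2 + |t| / ((1 - p) * n)) := by
  obtain ⟨hp0, hp1⟩ := hp
  have hq0 : 0 < 1 - p := by linarith
  have hn' : (0 : ℝ) < n := by exact_mod_cast hn
  have hpn : 0 < p * n := by positivity
  have hqn : 0 < (1 - p) * n := by positivity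
  have hM : ((n - N : ℕ) : ℝ) = (1 - p) * n + -t := by rw [Nat.cast_sub hNn, hN]; ring
  have hNlo : 3 * (p * n) / 4 ≤ N := by rw [hN]; linarith [neg_abs_le t]
  have hMlo : 3 * ((1 - p) * n) / 4 ≤ ((n - N : ℕ) : ℝ) := by rw [hM]; linarith [le_abs_self t]
  have hN0 : N ≠ 0 := (Nat.cast_pos.1 (by linarith : (0 : ℝ) < N)).ne'
  have hM0 : n - N ≠ 0 := (Nat.cast_pos.1 (by linarith : (0 : ℝ) < (n - N : ℕ))).ne'
  have hlogN : log N = log p + log n + log (1 + t / (p * n)) := by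
    rw [hN, log_add_eq_log_add_log_one_add_div hpn (by linarith), log_mul hp0.ne' hn'.ne']
  have hlogM : log (n - N : ℕ) = log (1 - p) + log n + log (1 + -t / ((1 - p) * n)) := by
    rw [hM, log_add_eq_log_add_log_one_add_div hqn (by linarith), log_mul hq0.ne' hn'.ne']
  have hF₁ := abs_add_half_mul_log_one_add_div_sub_le hpn htp
  have hF₂ := abs_add_half_mul_log_one_add_div_sub_le hqn (t := -t) (by rwa [abs_neg])
  have hrn₀ := stirlingRemainder_nonneg hn.ne'
  have hrN₀ := stirlingRemainder_nonneg hN0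
  have hrM₀ := stirlingRemainder_nonneg hM0
  have hident : log (n.choose N) - (N * log ((1 - p) / p) - n * log (1 - p) - (1 / 2) * log n
        - (1 / 2) * log (p * (1 - p)) - log (2 * π) / 2 - t ^ 2 / (2 * p * (1 - p) * n))
      = (stirlingRemainder n - stirlingRemainder N - stirlingRemainder (n - N))
        - ((p * n + t + 1 / 2) * log (1 + t / (p * n)) - (t + t ^ 2 / (2 * (p * n))))
        - (((1 - p) * n + -t + 1 / 2) * log (1 + -t / ((1 - p) * n))
          - (-t + (-t) ^ 2 / (2 * ((1 - p) * n)))) := by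
    rw [log_choose_eq hNn, hlogN, hlogM, hM, hN, log_div hq0.ne' hp0.ne', log_mul hp0.ne' hq0.ne']
    field_simp
    ring
  have hrn : stirlingRemainder n ≤ 1 / n :=
    (stirlingRemainder_le hn.ne').trans (one_div_le_one_div_of_le hn' (by linarith))
  have hrN : stirlingRemainder N ≤ 1 / (p * n) :=
    (stirlingRemainder_le hN0).trans (one_div_le_one_div_of_le hpn (by linarith))
  have hrM : stirlingRemainder (n - N) ≤ 1 / ((1 - p) * n) :=
    (stirlingRemainder_le hM0).trans (one_div_le_one_div_of_le hqn (by linarith))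
  have hR : |stirlingRemainder n - stirlingRemainder N - stirlingRemainder (n - N)|
      ≤ 1 / n + 1 / (p * n) + 1 / ((1 - p) * n) := by
    rw [abs_le]; constructor <;> linarith
  rw [hident]
  rw [abs_neg] at hF₂
  grw [abs_sub, abs_sub, hR, hF₁, hF₂]
  linarith

lemma abs_sqrt_mul_le {n : ℕ} {c R x : ℝ} (hc : 0 < c) (hn : (4 * R / c) ^ 2 ≤ n) (hx : |x| ≤ R) :
    |√n * x| ≤ c * n / 4 := by
  have hR : 4 * R / c ≤ √n := (le_abs_self _).trans (abs_le_sqrt hn)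
  rw [div_le_iff₀ hc] at hR
  calc |√n * x| = √n * |x| := by rw [abs_mul, abs_of_nonneg (sqrt_nonneg _)]
    _ ≤ √n * (√n * c / 4) := by gcongr; linarith
    _ = c * n / 4 := by linear_combination (c / 4) * mul_self_sqrt n.cast_nonneg

lemma one_div_add_cube_div_add_div_le {n : ℕ} {c R t : ℝ} (hc : 0 < c) (hn : 0 < n)
    (ht : |t| ≤ R * √n) :
    1 / (c * n) + 3 * |t| ^ 3 / (c * n) ^ 2 + |t| / (c * n)
      ≤ (1 / c + 3 * R ^ 3 / c ^ 2 + R / c) / √n := by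
  have hs : 1 ≤ √n := one_le_sqrt.2 (by exact_mod_cast hn)
  have hR : 0 ≤ R := nonneg_of_mul_nonneg_left ((abs_nonneg t).trans ht) (by positivity)
  set s := √(n : ℝ)
  have hns : (n : ℝ) = s ^ 2 := (sq_sqrt n.cast_nonneg).symm
  rw [hns]
  calc _ ≤ 1 / (c * s) + 3 * (R * s) ^ 3 / (c * s ^ 2) ^ 2 + R * s / (c * s ^ 2) := by
        gcongr
        nlinarith
    _ = _ := by field_simp

lemma eq_inv_sqrt_two_pi_mul_exp_mul_exp_mul_exp {y : ℝ} (hy : 0 < y) (a b : ℝ) :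
    y = (√(2 * π))⁻¹ * exp a * exp b * exp (log y + log (2 * π) / 2 - a - b) := by
  have h2π : 0 < 2 * π := by positivity
  rw [← exp_log (sqrt_pos.2 h2π), log_sqrt h2π.le, ← exp_neg, ← exp_add, ← exp_add, ← exp_add]
  conv_lhs => rw [← exp_log hy]
  ring_nf

/-- local central limit theorem type asymptotics for binomial coefficients:
for `N = pn + √n·x` an integer in `[0,n]` with `|x| ≤ R`,
`C(n,N) = (2π)^{−1/2} e^{−x²/(2p(1−p))} · exp(N log((1−p)/p) − n log(1−p) − ½ log n − ½ log(p(1−p))) · e^{O(n^{−1/2})}`,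
where the implied constant depends only on `p` and `R`. -/
theorem stmt10 (p R : ℝ) (hp : p ∈ Set.Ioo (0 : ℝ) 1) (hR : 0 < R) :
    ∃ K > (0 : ℝ), ∃ N₀ : ℕ, ∀ n : ℕ, N₀ ≤ n → ∀ x : ℝ, |x| ≤ R →
      ∀ N : ℕ, N ≤ n → (N : ℝ) = p * n + Real.sqrt n * x →
        ∃ err : ℝ, |err| ≤ K / Real.sqrt n ∧
          (n.choose N : ℝ) = (Real.sqrt (2 * Real.pi))⁻¹
            * Real.exp (-x ^ 2 / (2 * p * (1 - p)))
            * Real.exp ((N : ℝ) * Real.log ((1 - p) / p) - (n : ℝ) * Real.log (1 - p)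
                - (1 / 2) * Real.log n - (1 / 2) * Real.log (p * (1 - p)))
            * Real.exp err := by
  have hp0 : 0 < p := hp.1
  have hq0 : 0 < 1 - p := by linarith [hp.2]
  refine ⟨1 + (1 / p + 3 * R ^ 3 / p ^ 2 + R / p)
      + (1 / (1 - p) + 3 * R ^ 3 / (1 - p) ^ 2 + R / (1 - p)), by positivity,
    ⌈(4 * R / p) ^ 2 + (4 * R / (1 - p)) ^ 2⌉₊ + 1,
    fun n hn x hx N hNn hN => ⟨_, ?_, eq_inv_sqrt_two_pi_mul_exp_mul_exp_mul_exp
      (Nat.cast_pos.2 (Nat.choose_pos hNn)) _ _⟩⟩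
  have hn0 : 0 < n := by omega
  have hn' : (4 * R / p) ^ 2 + (4 * R / (1 - p)) ^ 2 ≤ n :=
    (Nat.le_ceil _).trans (by exact_mod_cast (Nat.le_succ _).trans hn)
  have ht : |√n * x| ≤ R * √n := by
    rw [abs_mul, abs_of_nonneg (sqrt_nonneg _), mul_comm]; gcongr
  have hgauss : (√n * x) ^ 2 / (2 * p * (1 - p) * n) = x ^ 2 / (2 * p * (1 - p)) := by
    rw [mul_pow, sq_sqrt n.cast_nonneg]; field_simp
  have key := abs_log_choose_sub_gaussian_le hp hn0 hNn hN
    (abs_sqrt_mul_le hp0 (by linarith [sq_nonneg (4 * R / (1 - p))]) hx)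
    (abs_sqrt_mul_le hq0 (by linarith [sq_nonneg (4 * R / p)]) hx)
  rw [hgauss] at key
  grw [one_div_add_cube_div_add_div_le hp0 hn0 ht, one_div_add_cube_div_add_div_le hq0 hn0 ht,
    one_div_le_one_div_of_le (sqrt_pos.2 (by positivity))
      (sqrt_le_self_iff.2 (Or.inr (by exact_mod_cast hn0)))] at key
  refine (le_of_eq ?_).trans (key.trans (le_of_eq ?_))
  · congr 1; ring
  · ring
end

section
/- Fix k ∈ ℕ and integers 0 < m < T with n = T − m. Let x, y ∈ 𝔚_k with T ≥ y_i − x_i ≥ 0 for all i, and let (L₁,…,L_k) be uniformly distributed on the set Ω_avoid(0,T,x,y) of k-tuples of non-crossing up-right paths from x to y. Then for any integers λ₁ ≥ λ₂ ≥ ⋯ ≥ λ_k, P( L₁(m) = λ₁, …, L_k(m) = λ_k ) = det( C(m, λ_i − x_j − i + j) )_{1≤i,j≤k} · det( C(n, y_i − λ_j − i + j) )_{1≤i,j≤k} / det( C(T, y_i − x_j − i + j) )_{1≤i,j≤k}, where C(n,r) is the binomial coefficient (with C(n,r) = 0 when r < 0 or r > n). -/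
/-!
Write `N_t(x, y)` for the number of non-crossing `k`-tuples of up-right paths of length `t` from
`x` to `y`, and `D_t(x, y) = det (C(t, y_i - x_j - i + j))`. Both satisfy the same recursion in `t`.
Sorting tuples by the set `s` of paths that move up at the last step gives
`N_{t+1}(x, y) = ∑_s N_t(x, y - 1_s)`; Pascal's rule splits every row of the matrix in two, and
multilinearity of the determinant in the rows gives `D_{t+1}(x, y) = ∑_s D_t(x, y - 1_s)`.
When `y - 1_s` is not weakly decreasing both terms vanish: there are no tuples, and two adjacent
rows of the matrix coincide. Both are `[x = y]` at `t = 0`, hence `N = D`. Cutting tuples at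
time `m`, the same recursion in `T - m` shows that `N_m(x, λ) N_{T-m}(λ, y)` of them pass
through `λ` at time `m`.
-/

namespace NonCrossingPaths

def intChoose (n : ℕ) (r : ℤ) : ℕ := if 0 ≤ r then n.choose r.toNat else 0

lemma intChoose_zero_left (r : ℤ) : intChoose 0 r = if r = 0 then 1 else 0 := by
  unfold intChoose
  rcases lt_trichotomy r 0 with hr | rfl | hr
  · simp [hr.not_ge, hr.ne]
  · simp
  · simp [hr.le, hr.ne', Nat.choose_eq_zero_of_lt (by omega : 0 < r.toNat)]

lemma intChoose_succ_left (n : ℕ) (r : ℤ) :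
    intChoose (n + 1) r = intChoose n (r - 1) + intChoose n r := by
  unfold intChoose
  rcases lt_trichotomy r 0 with hr | rfl | hr
  · rw [if_neg (by omega), if_neg (by omega), if_neg (by omega)]
  · simp
  · obtain ⟨u, rfl⟩ : ∃ u : ℕ, r = u + 1 := ⟨(r - 1).toNat, by omega⟩
    simp only [add_sub_cancel_right, Nat.cast_nonneg, if_true, show (0 : ℤ) ≤ u + 1 by omega,
      Int.toNat_natCast]
    rw [show ((u : ℤ) + 1).toNat = u + 1 by omega, Nat.choose_succ_succ']

variable {k : ℕ}

def binomialMatrix (R : Type*) [NatCast R] (t : ℕ) (x y : Fin k → ℤ) :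
    Matrix (Fin k) (Fin k) R :=
  Matrix.of fun i j => (intChoose t (y i - x j - i + j) : R)

section Determinant

variable {R : Type*} [CommRing R]

lemma det_binomialMatrix_zero {x y : Fin k → ℤ} (hx : Antitone x) (hy : Antitone y) :
    (binomialMatrix R 0 x y).det = if x = y then 1 else 0 := by
  have hanti {z : Fin k → ℤ} (hz : Antitone z) : StrictAnti fun i : Fin k => z i - i :=
    fun a b hab => by
      have : (a : ℤ) < b := by exact_mod_cast hab
      linarith [hz hab.le]
  have hperm (σ : Equiv.Perm (Fin k)) (hσ : ∀ i, y (σ i) - σ i = x i - i) : σ = 1 := by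
    have : StrictMono σ := fun a b hab =>
      (hanti hy).lt_iff_gt.1 (by rw [hσ, hσ]; exact hanti hx hab)
    exact Equiv.ext (congrFun this.eq_id)
  rw [Matrix.det_apply, Finset.sum_eq_single 1]
  · simp [binomialMatrix, intChoose_zero_left, Fintype.prod_boole, funext_iff, sub_eq_zero,
      @eq_comm _ (y _)]
  · intro σ _ hσ
    obtain ⟨i, hi⟩ : ∃ i, y (σ i) - σ i ≠ x i - i := by
      by_contra! h
      exact hσ (hperm σ h)
    rw [Finset.prod_eq_zero (Finset.mem_univ i), smul_zero]
    simp [binomialMatrix, intChoose_zero_left]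
    omega
  · simp

lemma binomialMatrix_succ (t : ℕ) (x y : Fin k → ℤ) :
    binomialMatrix R (t + 1) x y = binomialMatrix R t x (y - 1) + binomialMatrix R t x y := by
  ext i j
  simp only [binomialMatrix, Matrix.add_apply, Matrix.of_apply, Pi.sub_apply, Pi.one_apply,
    intChoose_succ_left, Nat.cast_add]
  ring_nf

lemma det_binomialMatrix_succ (t : ℕ) (x y : Fin k → ℤ) :
    (binomialMatrix R (t + 1) x y).det =
      ∑ s : Finset (Fin k), (binomialMatrix R t x (s.piecewise (y - 1) y)).det := by
  rw [binomialMatrix_succ]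
  refine (Matrix.detRowAlternating.map_add_univ _ _).trans (Finset.sum_congr rfl fun s _ => ?_)
  congr 1
  ext i j
  by_cases hi : i ∈ s <;> simp [binomialMatrix, Finset.piecewise, hi]

lemma exists_succ_eq_add_one_of_not_antitone {y : Fin k → ℤ} (hy : Antitone y)
    {s : Finset (Fin k)} (hs : ¬ Antitone (s.piecewise (y - 1) y)) :
    ∃ i j : Fin k, (j : ℕ) = i + 1 ∧
      s.piecewise (y - 1) y j = s.piecewise (y - 1) y i + 1 := by
  cases k with
  | zero => exact absurd (fun a => a.elim0) hs
  | succ k =>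
    obtain ⟨i, hi⟩ := not_forall.1 (mt Fin.antitone_iff_succ_le.2 hs)
    refine ⟨i.castSucc, i.succ, rfl, ?_⟩
    have := hy (Fin.castSucc_le_succ i)
    by_cases h1 : i.castSucc ∈ s <;> by_cases h2 : i.succ ∈ s <;>
      simp [Finset.piecewise, h1, h2] at hi ⊢ <;> omega

lemma det_binomialMatrix_eq_zero_of_not_antitone (t : ℕ) (x : Fin k → ℤ) {y : Fin k → ℤ}
    (hy : Antitone y) {s : Finset (Fin k)} (hs : ¬ Antitone (s.piecewise (y - 1) y)) :
    (binomialMatrix R t x (s.piecewise (y - 1) y)).det = 0 := by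
  obtain ⟨i, j, hij, hz⟩ := exists_succ_eq_add_one_of_not_antitone hy hs
  refine Matrix.det_zero_of_row_eq (i := i) (j := j) (Fin.ne_of_val_ne (by omega)) ?_
  ext l
  simp only [binomialMatrix, Matrix.of_apply, hz, hij]
  push_cast
  ring_nf

end Determinant

/-- `avoidingPaths k t x y` is `Ω_avoid(0, t, x, y)`; `L i r` is the height of path `i` at
time `r`. -/
def avoidingPaths (k t : ℕ) (x y : Fin k → ℤ) : Set (Fin k → Fin (t + 1) → ℤ) :=
  {L | (∀ i, L i 0 = x i) ∧ (∀ i, L i (Fin.last t) = y i) ∧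
    (∀ i, ∀ j : Fin t, L i j.succ = L i j.castSucc ∨ L i j.succ = L i j.castSucc + 1) ∧
    (∀ r : Fin (t + 1), ∀ i j : Fin k, i ≤ j → L j r ≤ L i r)}

lemma mem_Icc_of_mem_avoidingPaths {t : ℕ} {x y : Fin k → ℤ} {L : Fin k → Fin (t + 1) → ℤ}
    (hL : L ∈ avoidingPaths k t x y) (i : Fin k) (r : Fin (t + 1)) :
    L i r ∈ Set.Icc (x i) (x i + r) := by
  induction r using Fin.induction with
  | zero => simp [hL.1]
  | succ r ih =>
    simp only [Set.mem_Icc, Fin.val_castSucc, Fin.val_succ, Nat.cast_add, Nat.cast_one] at ih ⊢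
    rcases hL.2.2.1 i r with h | h <;> rw [h] <;> omega

lemma avoidingPaths_finite (t : ℕ) (x y : Fin k → ℤ) : (avoidingPaths k t x y).Finite := by
  refine (Set.Finite.pi fun i => Set.Finite.pi fun _ => Set.finite_Icc (x i) (x i + t)).subset ?_
  rintro L hL i - r -
  have hr := mem_Icc_of_mem_avoidingPaths hL i r
  have hrt : (r : ℤ) ≤ t := by exact_mod_cast Nat.lt_succ_iff.1 r.isLt
  exact ⟨hr.1, by linarith [hr.2]⟩

lemma disjoint_avoidingPaths {t : ℕ} {x y y' : Fin k → ℤ} (h : y ≠ y') :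
    Disjoint (avoidingPaths k t x y) (avoidingPaths k t x y') :=
  Set.disjoint_left.2 fun _ hL hL' => h (funext fun i => (hL.2.1 i).symm.trans (hL'.2.1 i))

lemma avoidingPaths_eq_empty_of_not_antitone {t : ℕ} {x y : Fin k → ℤ} (hy : ¬ Antitone y) :
    avoidingPaths k t x y = ∅ :=
  Set.eq_empty_of_forall_notMem fun L hL => hy fun i j hij => by
    simpa only [hL.2.1] using hL.2.2.2 (Fin.last t) i j hij

lemma ncard_avoidingPaths_zero {x y : Fin k → ℤ} (hx : Antitone x) :
    (avoidingPaths k 0 x y).ncard = if x = y then 1 else 0 := by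
  split_ifs with hxy
  · subst hxy
    refine Set.ncard_eq_one.2 ⟨fun i _ => x i, Set.eq_singleton_iff_unique_mem.2 ⟨?_, ?_⟩⟩
    · exact ⟨fun _ => rfl, fun _ => rfl, fun _ j => j.elim0, fun _ _ _ hij => hx hij⟩
    · exact fun L hL => funext fun i => funext fun r => by rw [Fin.fin_one_eq_zero r, hL.1]
  · rw [Set.ncard_eq_zero (avoidingPaths_finite 0 x y)]
    refine Set.eq_empty_of_forall_notMem fun L hL => hxy ?_
    exact funext fun i => (hL.1 i).symm.trans (hL.2.1 i)

lemma snoc_mem_avoidingPaths {t : ℕ} {x y : Fin k → ℤ} (hy : Antitone y) {s : Finset (Fin k)}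
    {M : Fin k → Fin (t + 1) → ℤ} (hM : M ∈ avoidingPaths k t x (s.piecewise (y - 1) y)) :
    (fun i => Fin.snoc (M i) (y i)) ∈ avoidingPaths k (t + 1) x y := by
  obtain ⟨hstart, hend, hstep, hcross⟩ := hM
  refine ⟨fun i => ?_, fun i => Fin.snoc_last .., fun i j => ?_, fun r i j hij => ?_⟩
  · beta_reduce
    rw [← Fin.castSucc_zero, Fin.snoc_castSucc, hstart]
  · induction j using Fin.lastCases with
    | last =>
      simp only [Fin.succ_last, Fin.snoc_last, Fin.snoc_castSucc, hend]
      by_cases hi : i ∈ s <;> simp [Finset.piecewise, hi]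
    | cast j =>
      beta_reduce
      rw [Fin.succ_castSucc, Fin.snoc_castSucc, Fin.snoc_castSucc]
      exact hstep i j
  · induction r using Fin.lastCases with
    | last => simpa using hy hij
    | cast r => simpa using hcross r i j hij

lemma exists_init_mem_avoidingPaths {t : ℕ} {x y : Fin k → ℤ}
    {L : Fin k → Fin (t + 2) → ℤ} (hL : L ∈ avoidingPaths k (t + 1) x y) :
    ∃ s : Finset (Fin k),
      (fun i => Fin.init (L i)) ∈ avoidingPaths k t x (s.piecewise (y - 1) y) := by
  obtain ⟨hstart, hend, hstep, hcross⟩ := hL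
  refine ⟨Finset.univ.filter fun i => L i (Fin.last t).castSucc ≠ y i, fun i => hstart i, fun i => ?_,
    fun i j => by simp only [Fin.init, ← Fin.succ_castSucc]; exact hstep i j.castSucc,
    fun r i j hij => hcross _ i j hij⟩
  have := hstep i (Fin.last t)
  rw [Fin.succ_last, hend] at this
  change L i (Fin.last t).castSucc = _
  by_cases hi : L i (Fin.last t).castSucc = y i
  · rw [Finset.piecewise_eq_of_notMem _ _ _ (by simpa using hi)]
    exact hi
  · rw [Finset.piecewise_eq_of_mem _ _ _ (by simpa using hi), Pi.sub_apply, Pi.one_apply]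
    omega

lemma avoidingPaths_succ {t : ℕ} {x y : Fin k → ℤ} (hy : Antitone y) :
    avoidingPaths k (t + 1) x y = (fun M i => Fin.snoc (M i) (y i)) ''
      ⋃ s : Finset (Fin k), avoidingPaths k t x (s.piecewise (y - 1) y) := by
  ext L
  constructor
  · intro hL
    obtain ⟨s, hs⟩ := exists_init_mem_avoidingPaths hL
    refine ⟨_, Set.mem_iUnion.2 ⟨s, hs⟩, funext fun i => ?_⟩
    simpa [hL.2.1 i] using Fin.snoc_init_self (L i)
  · rintro ⟨M, hM, rfl⟩
    obtain ⟨s, hs⟩ := Set.mem_iUnion.1 hM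
    exact snoc_mem_avoidingPaths hy hs

lemma ncard_avoidingPaths_sep_succ {t : ℕ} {x y : Fin k → ℤ} (hy : Antitone y)
    (C : (Fin k → Fin (t + 1) → ℤ) → Prop) :
    {L ∈ avoidingPaths k (t + 1) x y | C fun i => Fin.init (L i)}.ncard =
      ∑ s : Finset (Fin k), {M ∈ avoidingPaths k t x (s.piecewise (y - 1) y) | C M}.ncard := by
  set extend : (Fin k → Fin (t + 1) → ℤ) → Fin k → Fin (t + 2) → ℤ :=
    fun M i => Fin.snoc (M i) (y i)
  have hinit (M) : (fun i => Fin.init (extend M i)) = M := funext fun i => Fin.init_snoc ..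
  have hsep : {L ∈ avoidingPaths k (t + 1) x y | C fun i => Fin.init (L i)} =
      extend '' ⋃ s : Finset (Fin k), {M ∈ avoidingPaths k t x (s.piecewise (y - 1) y) | C M} := by
    rw [avoidingPaths_succ hy]
    ext L
    constructor
    · rintro ⟨⟨M, hM, rfl⟩, hC⟩
      obtain ⟨s, hs⟩ := Set.mem_iUnion.1 hM
      exact ⟨M, Set.mem_iUnion.2 ⟨s, hs, by rwa [hinit] at hC⟩, rfl⟩
    · rintro ⟨M, hM, rfl⟩
      obtain ⟨s, hs, hC⟩ := Set.mem_iUnion.1 hM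
      exact ⟨⟨M, Set.mem_iUnion.2 ⟨s, hs⟩, rfl⟩, by rwa [hinit]⟩
  have hmem (s : Finset (Fin k)) (i : Fin k) : i ∈ s ↔ s.piecewise (y - 1) y i < y i := by
    by_cases hi : i ∈ s <;> simp [hi]
  have hdisj : Pairwise fun s s' : Finset (Fin k) =>
      Disjoint (avoidingPaths k t x (s.piecewise (y - 1) y))
        (avoidingPaths k t x (s'.piecewise (y - 1) y)) :=
    fun s s' hss' => disjoint_avoidingPaths fun h =>
      hss' (Finset.ext fun i => by rw [hmem s, hmem s', h])
  rw [hsep, Set.ncard_image_of_injective _ fun M M' h => by rw [← hinit M, ← hinit M', h],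
    Set.ncard_iUnion_of_finite (fun s => (avoidingPaths_finite ..).subset (Set.sep_subset ..))
      fun s s' h => (hdisj h).mono (Set.sep_subset ..) (Set.sep_subset ..),
    finsum_eq_sum_of_fintype]

lemma ncard_avoidingPaths_succ {t : ℕ} {x y : Fin k → ℤ} (hy : Antitone y) :
    (avoidingPaths k (t + 1) x y).ncard =
      ∑ s : Finset (Fin k), (avoidingPaths k t x (s.piecewise (y - 1) y)).ncard := by
  simpa using ncard_avoidingPaths_sep_succ hy fun _ => True

theorem ncard_avoidingPaths_eq_det (R : Type*) [CommRing R] {t : ℕ} {x y : Fin k → ℤ}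
    (hx : Antitone x) (hy : Antitone y) :
    ((avoidingPaths k t x y).ncard : R) = (binomialMatrix R t x y).det := by
  induction t generalizing y with
  | zero =>
    rw [ncard_avoidingPaths_zero hx, det_binomialMatrix_zero hx hy]
    split_ifs <;> simp
  | succ t ih =>
    rw [ncard_avoidingPaths_succ hy, det_binomialMatrix_succ, Nat.cast_sum]
    refine Finset.sum_congr rfl fun s _ => ?_
    by_cases hs : Antitone (s.piecewise (y - 1) y)
    · exact ih hs
    · rw [avoidingPaths_eq_empty_of_not_antitone hs, Set.ncard_empty, Nat.cast_zero,
        det_binomialMatrix_eq_zero_of_not_antitone t x hy hs]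

theorem ncard_avoidingPaths_sep_eq_mul {m n : ℕ} {x lam y : Fin k → ℤ} (hlam : Antitone lam)
    (hy : Antitone y) :
    {L ∈ avoidingPaths k (m + n) x y | ∀ i, L i ⟨m, by omega⟩ = lam i}.ncard =
      (avoidingPaths k m x lam).ncard * (avoidingPaths k n lam y).ncard := by
  induction n generalizing y with
  | zero =>
    rw [ncard_avoidingPaths_zero hlam]
    obtain rfl | hne := eq_or_ne lam y
    · rw [if_pos rfl, mul_one]
      exact congrArg Set.ncard (Set.sep_eq_self_iff_mem_true.2 fun L hL => hL.2.1)
    · rw [if_neg hne, mul_zero, Set.sep_eq_empty_iff_mem_false.2 fun L hL hLm =>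
        hne (funext fun i => (hLm i).symm.trans (hL.2.1 i)), Set.ncard_empty]
  | succ n ih =>
    calc _ = ∑ s : Finset (Fin k), {M ∈ avoidingPaths k (m + n) x (s.piecewise (y - 1) y) |
            ∀ i, M i ⟨m, by omega⟩ = lam i}.ncard :=
          ncard_avoidingPaths_sep_succ hy fun M => ∀ i, M i ⟨m, by omega⟩ = lam i
      _ = ∑ s : Finset (Fin k), (avoidingPaths k m x lam).ncard *
            (avoidingPaths k n lam (s.piecewise (y - 1) y)).ncard := by
          refine Finset.sum_congr rfl fun s _ => ?_
          by_cases hs : Antitone (s.piecewise (y - 1) y)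
          · exact ih hs
          · simp [avoidingPaths_eq_empty_of_not_antitone hs]
      _ = _ := by rw [ncard_avoidingPaths_succ hy, Finset.mul_sum]

end NonCrossingPaths

open NonCrossingPaths in
/-- the fixed-time distribution of `k` uniformly random non-crossing
up-right paths from `x` to `y` on `[[0,T]]` is a ratio of determinants of binomial
coefficients (Lindström–Gessel–Viennot / Jacobi–Trudi). Paths are encoded as functions
`Fin k → Fin (T+1) → ℤ`. -/
theorem stmt11 (k T m : ℕ) (hmT : m < T)
    (x y : Fin k → ℤ) (hx : Antitone x) (hy : Antitone y)
    (lam : Fin k → ℤ) (hlam : Antitone lam)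
    (Om : Set (Fin k → Fin (T + 1) → ℤ))
    (hOm : Om = {L | (∀ i, L i 0 = x i) ∧ (∀ i, L i (Fin.last T) = y i) ∧
      (∀ i, ∀ j : Fin T,
        L i j.succ = L i j.castSucc ∨ L i j.succ = L i j.castSucc + 1) ∧
      (∀ r : Fin (T + 1), ∀ i j : Fin k, i ≤ j → L j r ≤ L i r)})
    (bin : ℕ → ℤ → ℝ)
    (hbin : ∀ n r, bin n r = if 0 ≤ r then (n.choose r.toNat : ℝ) else 0) :
    (Set.ncard {L ∈ Om | ∀ i : Fin k, L i ⟨m, by omega⟩ = lam i} : ℝ)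
        / (Set.ncard Om : ℝ) =
      Matrix.det (Matrix.of fun i j : Fin k =>
          bin m (lam i - x j - (i.val : ℤ) + (j.val : ℤ)))
        * Matrix.det (Matrix.of fun i j : Fin k =>
          bin (T - m) (y i - lam j - (i.val : ℤ) + (j.val : ℤ)))
        / Matrix.det (Matrix.of fun i j : Fin k =>
          bin T (y i - x j - (i.val : ℤ) + (j.val : ℤ))) := by
  have hdet {t : ℕ} {u v : Fin k → ℤ} (hu : Antitone u) (hv : Antitone v) :
      Matrix.det (Matrix.of fun i j : Fin k => bin t (v i - u j - (i.val : ℤ) + (j.val : ℤ))) =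
        (avoidingPaths k t u v).ncard := by
    rw [ncard_avoidingPaths_eq_det ℝ hu hv]
    congr 1
    ext i j
    simp [binomialMatrix, intChoose, hbin]
  obtain ⟨n, rfl⟩ := Nat.exists_eq_add_of_le hmT.le
  subst hOm
  rw [hdet hx hlam, hdet hlam hy, hdet hx hy, Nat.add_sub_cancel_left, ← Nat.cast_mul,
    ← ncard_avoidingPaths_sep_eq_mul hlam hy]
  rfl
end

section
/- Fix k ∈ ℕ, integers T₀ < T₁, a subset S ⊆ [[T₀,T₁]], a function g : [[T₀,T₁]] → [−∞,∞), and vectors x, y, x′, y′ ∈ 𝔚_k with x_i ≤ x′_i and y_i ≤ y′_i for all i. Assume Ω_avoid(T₀,T₁,x,y,∞,g;S) and Ω_avoid(T₀,T₁,x′,y′,∞,g;S) are both nonempty. Then there exists a probability space supporting two [[1,k]]-indexed Bernoulli line ensembles 𝔏^t and 𝔏^b on [[T₀,T₁]] such that 𝔏^t is uniformly distributed on Ω_avoid(T₀,T₁,x′,y′,∞,g;S), 𝔏^b is uniformly distributed on Ω_avoid(T₀,T₁,x,y,∞,g;S), and almost surely L^t_i(r) ≥ L^b_i(r) for all i ∈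 [[1,k]] and r ∈ [[T₀,T₁]]. -/
open MeasureTheory
open scoped ENNReal

/-- `L` is an up-right path on `[[T₀,T₁]]`. -/
def UpRightOn (T₀ T₁ : ℤ) (L : ℤ → ℤ) : Prop :=
  ∀ r : ℤ, T₀ ≤ r → r < T₁ → (L (r + 1) = L r ∨ L (r + 1) = L r + 1)

/-- The set `Ω_avoid(T₀,T₁,x,y,∞,g;S)` of `k`-tuples of up-right paths on `[[T₀,T₁]]`
with entrance data `x` and exit data `y`, weakly ordered and staying above `g` at all
times in `S` (paths are normalized to vanish outside `[[T₀,T₁]]`). -/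
def OmegaAvoidS (k : ℕ) (T₀ T₁ : ℤ) (x y : Fin k → ℤ)
    (g : ℤ → WithBot ℤ) (S : Set ℤ) : Set (Fin k → ℤ → ℤ) :=
  {L | (∀ i, UpRightOn T₀ T₁ (L i)) ∧ (∀ i, L i T₀ = x i) ∧ (∀ i, L i T₁ = y i) ∧
    (∀ r ∈ S, (∀ i j : Fin k, i ≤ j → L j r ≤ L i r) ∧
      ∀ i, g r ≤ (L i r : WithBot ℤ)) ∧
    (∀ i, ∀ r : ℤ, r < T₀ ∨ T₁ < r → L i r = 0)}

/-!
With the pointwise order, the two sets `A = Ω_avoid(x, y)` and `B = Ω_avoid(x', y')` satisfy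
`A ⊓ B ⊆ A` and `A ⊔ B ⊆ B`. For `T ⊆ A` the Ahlswede–Daykin inequality
`|T| |B| ≤ |T ⊼ B| |T ⊻ B|` then gives `|T| |B| ≤ |A| |{b ∈ B | ∃ a ∈ T, a ≤ b}|`, which is
Hall's condition for matching `A × [|B|]` perfectly into `B × [|A|]` along `a ≤ b`. Both blown-up
sets have `|A| |B|` elements, so under the uniform measure on `A × [|B|]` the first coordinate and
the `B`-coordinate of its partner are uniform on `A` and on `B`: a monotone coupling.
-/

open Finset ProbabilityTheory
open scoped FinsetFamily

open Classical in
theorem exists_equiv_prod_fin_of_card_mul_le {ι κ : Type*} [Fintype ι] [Fintype κ]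
    (r : ι → κ → Prop)
    (hall : ∀ T : Finset ι,
      #T * Fintype.card κ ≤ Fintype.card ι * #{b | ∃ a ∈ T, r a b}) :
    ∃ e : ι × Fin (Fintype.card κ) ≃ κ × Fin (Fintype.card ι), ∀ p, r p.1 (e p).1 := by
  have blown_up_hall : ∀ s : Finset (ι × Fin (Fintype.card κ)),
      #s ≤ #{q : κ × Fin (Fintype.card ι) | ∃ p ∈ s, r p.1 q.1} := by
    intro s
    have hs : s ⊆ s.image Prod.fst ×ˢ univ := fun p hp => by simpa using ⟨p.2, hp⟩
    have hnbr : ({q : κ × Fin (Fintype.card ι) | ∃ p ∈ s, r p.1 q.1} : Finset _) =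
        ({b | ∃ a ∈ s.image Prod.fst, r a b} : Finset κ) ×ˢ univ := by
      ext q; simp
    calc #s ≤ #(s.image Prod.fst) * Fintype.card κ := by
          simpa using card_le_card hs
      _ ≤ Fintype.card ι * #{b | ∃ a ∈ s.image Prod.fst, r a b} := hall _
      _ = _ := by rw [hnbr, card_product, card_univ, Fintype.card_fin, mul_comm]
  obtain ⟨f, hf, hfr⟩ := (Fintype.all_card_le_filter_rel_iff_exists_injective
    fun (p : ι × Fin (Fintype.card κ)) (q : κ × Fin (Fintype.card ι)) => r p.1 q.1).1 blown_up_hall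
  have hcard : Fintype.card (ι × Fin (Fintype.card κ)) =
      Fintype.card (κ × Fin (Fintype.card ι)) := by
    simp [mul_comm]
  exact ⟨.ofBijective f ((Fintype.bijective_iff_injective_and_card f).2 ⟨hf, hcard⟩), hfr⟩

open Classical in
theorem card_mul_card_le_card_mul_card_filter_le {α : Type*} [DistribLattice α]
    {A B : Set α} [Fintype A] [Fintype B]
    (hinf : ∀ a ∈ A, ∀ b ∈ B, a ⊓ b ∈ A) (hsup : ∀ a ∈ A, ∀ b ∈ B, a ⊔ b ∈ B) (T : Finset A) :
    #T * Fintype.card B ≤ Fintype.card A * #{b : B | ∃ a ∈ T, (a : α) ≤ b} := by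
  set T' := T.map (Function.Embedding.subtype _)
  have hT' : ∀ a ∈ T', a ∈ A := by simp +contextual [T']
  calc #T * Fintype.card B = #T' * #B.toFinset := by simp [T']
    _ ≤ #(T' ⊼ B.toFinset) * #(T' ⊻ B.toFinset) := le_card_infs_mul_card_sups _ _
    _ ≤ #A.toFinset * #(({b : B | ∃ a ∈ T, (a : α) ≤ b} : Finset B).map
          (Function.Embedding.subtype _)) := by
        refine Nat.mul_le_mul (card_le_card ?_) (card_le_card ?_)
        · rintro _ hc
          obtain ⟨a, ha, b, hb, rfl⟩ := mem_infs.1 hc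
          simpa using hinf a (hT' a ha) b (by simpa using hb)
        · rintro _ hc
          obtain ⟨a, ha, b, hb, rfl⟩ := mem_sups.1 hc
          simp only [T', mem_map, Function.Embedding.coe_subtype] at ha
          obtain ⟨a, ha, rfl⟩ := ha
          simpa using ⟨⟨a, ⟨a.2, ha⟩, le_sup_left⟩, hsup a a.2 b (by simpa using hb)⟩
    _ = _ := by simp

lemma uniformOn_univ_preimage_equiv {Ω Ω' : Type*} [MeasurableSpace Ω]
    [MeasurableSingletonClass Ω] [Fintype Ω] [MeasurableSpace Ω'] [MeasurableSingletonClass Ω']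
    [Fintype Ω'] (e : Ω ≃ Ω') (s : Set Ω') :
    uniformOn (Set.univ : Set Ω) (e ⁻¹' s) = uniformOn Set.univ s := by
  rw [uniformOn_univ, uniformOn_univ, Fintype.card_congr e,
    Measure.count_apply (Set.toFinite _).measurableSet,
    Measure.count_apply (Set.toFinite _).measurableSet,
    Set.encard_preimage_of_bijective e.bijective]

lemma uniformOn_univ_fst_eq {ι κ : Type*} [Fintype ι] [Fintype κ] [Nonempty κ]
    [MeasurableSpace (ι × κ)] [MeasurableSingletonClass (ι × κ)] (a : ι) :
    uniformOn (Set.univ : Set (ι × κ)) {ω | ω.1 = a} = (Fintype.card ι : ℝ≥0∞)⁻¹ := by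
  have hfiber : {ω : ι × κ | ω.1 = a} = {a} ×ˢ Set.univ := by ext; simp
  rw [uniformOn_univ, hfiber, Measure.count_apply (Set.toFinite _).measurableSet,
    Set.encard_prod, Set.encard_singleton, Set.encard_univ, ENat.card_eq_coe_fintype_card,
    Fintype.card_prod]
  push_cast
  rw [ENNReal.mul_div_mul_right _ _ (by simp) (by simp), one_div]

theorem exists_monotone_coupling_uniformOn {α : Type} [DistribLattice α] {A B : Set α}
    (hA : A.Finite) (hB : B.Finite) (hAne : A.Nonempty) (hBne : B.Nonempty)
    (hinf : ∀ a ∈ A, ∀ b ∈ B, a ⊓ b ∈ A) (hsup : ∀ a ∈ A, ∀ b ∈ B, a ⊔ b ∈ B) :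
    ∃ (Ω : Type) (_ : MeasurableSpace Ω) (P : Measure Ω), IsProbabilityMeasure P ∧
      ∃ Lt Lb : Ω → α, (∀ ω, Lt ω ∈ B) ∧ (∀ q ∈ B, P {ω | Lt ω = q} = (B.ncard : ℝ≥0∞)⁻¹) ∧
        (∀ ω, Lb ω ∈ A) ∧ (∀ q ∈ A, P {ω | Lb ω = q} = (A.ncard : ℝ≥0∞)⁻¹) ∧
        ∀ ω, Lb ω ≤ Lt ω := by
  have := hA.fintype
  have := hB.fintype
  have := hAne.to_subtype
  have := hBne.to_subtype
  obtain ⟨e, he⟩ := exists_equiv_prod_fin_of_card_mul_le (fun (a : A) (b : B) => (a : α) ≤ b)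
    (card_mul_card_le_card_mul_card_filter_le hinf hsup)
  let : MeasurableSpace (A × Fin (Fintype.card B)) := ⊤
  let : MeasurableSpace (B × Fin (Fintype.card A)) := ⊤
  have : MeasurableSingletonClass (A × Fin (Fintype.card B)) := ⟨fun _ => trivial⟩
  have : MeasurableSingletonClass (B × Fin (Fintype.card A)) := ⟨fun _ => trivial⟩
  refine ⟨A × Fin (Fintype.card B), ⊤, uniformOn Set.univ, inferInstance, fun ω => (e ω).1,
    fun ω => ω.1, fun ω => (e ω).1.2, fun q hq => ?_, fun ω => ω.1.2, fun q hq => ?_, he⟩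
  · have hfiber : {ω | ((e ω).1 : α) = q} = e ⁻¹' {p | p.1 = ⟨q, hq⟩} := by
      ext; simp [Subtype.ext_iff]
    rw [hfiber, uniformOn_univ_preimage_equiv, uniformOn_univ_fst_eq, ← Nat.card_coe_set_eq,
      Nat.card_eq_fintype_card]
  · have hfiber : {ω : A × Fin (Fintype.card B) | (ω.1 : α) = q} = {ω | ω.1 = ⟨q, hq⟩} := by
      ext; simp [Subtype.ext_iff]
    rw [hfiber, uniformOn_univ_fst_eq, ← Nat.card_coe_set_eq, Nat.card_eq_fintype_card]

namespace UpRightOn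

variable {T₀ T₁ : ℤ} {L M : ℤ → ℤ}

lemma monotoneOn (hL : UpRightOn T₀ T₁ L) : MonotoneOn L (Set.Icc T₀ T₁) :=
  monotoneOn_of_le_add_one Set.ordConnected_Icc fun r _ hr hr' => by
    rcases hL r hr.1 (Int.lt_of_add_one_le hr'.2) with h | h <;> omega

lemma inf (hL : UpRightOn T₀ T₁ L) (hM : UpRightOn T₀ T₁ M) : UpRightOn T₀ T₁ (L ⊓ M) :=
  fun r h₀ h₁ => by
    have := hL r h₀ h₁
    have := hM r h₀ h₁
    simp only [Pi.inf_apply]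
    omega

lemma sup (hL : UpRightOn T₀ T₁ L) (hM : UpRightOn T₀ T₁ M) : UpRightOn T₀ T₁ (L ⊔ M) :=
  fun r h₀ h₁ => by
    have := hL r h₀ h₁
    have := hM r h₀ h₁
    simp only [Pi.sup_apply]
    omega

end UpRightOn

section OmegaAvoidS

variable {k : ℕ} {T₀ T₁ : ℤ} {x y x' y' : Fin k → ℤ} {g : ℤ → WithBot ℤ} {S : Set ℤ}
  {L M : Fin k → ℤ → ℤ}

lemma mem_Icc_of_mem_omegaAvoidS (hL : L ∈ OmegaAvoidS k T₀ T₁ x y g S) (i : Fin k) {r : ℤ}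
    (hr : r ∈ Set.Icc T₀ T₁) : L i r ∈ Set.Icc (x i) (y i) := by
  obtain ⟨hup, hx, hy, -, -⟩ := hL
  have hmono := (hup i).monotoneOn
  exact ⟨hx i ▸ hmono (Set.left_mem_Icc.2 (hr.1.trans hr.2)) hr hr.1,
    hy i ▸ hmono hr (Set.right_mem_Icc.2 (hr.1.trans hr.2)) hr.2⟩

lemma omegaAvoidS_finite (k : ℕ) (T₀ T₁ : ℤ) (x y : Fin k → ℤ) (g : ℤ → WithBot ℤ)
    (S : Set ℤ) : (OmegaAvoidS k T₀ T₁ x y g S).Finite := by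
  let restrict (L : Fin k → ℤ → ℤ) (i : Fin k) (r : Set.Icc T₀ T₁) : ℤ := L i r
  have hmaps : Set.MapsTo restrict (OmegaAvoidS k T₀ T₁ x y g S)
      (Set.univ.pi fun i => Set.univ.pi fun _ => Set.Icc (x i) (y i)) :=
    fun L hL i _ r _ => mem_Icc_of_mem_omegaAvoidS hL i r.2
  have hinj : Set.InjOn restrict (OmegaAvoidS k T₀ T₁ x y g S) := by
    intro L hL M hM h
    funext i r
    by_cases hr : r ∈ Set.Icc T₀ T₁
    · exact congrFun (congrFun h i) ⟨r, hr⟩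
    · have hr' : r < T₀ ∨ T₁ < r := by simp only [Set.mem_Icc] at hr; omega
      rw [hL.2.2.2.2 i r hr', hM.2.2.2.2 i r hr']
  exact .of_injOn hmaps hinj (Set.Finite.pi fun _ => Set.Finite.pi fun _ => Set.finite_Icc _ _)

lemma inf_mem_omegaAvoidS (hxx : ∀ i, x i ≤ x' i) (hyy : ∀ i, y i ≤ y' i)
    (hL : L ∈ OmegaAvoidS k T₀ T₁ x y g S) (hM : M ∈ OmegaAvoidS k T₀ T₁ x' y' g S) :
    L ⊓ M ∈ OmegaAvoidS k T₀ T₁ x y g S := by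
  obtain ⟨hLup, hLx, hLy, hLS, hLout⟩ := hL
  obtain ⟨hMup, hMx, hMy, hMS, hMout⟩ := hM
  refine ⟨fun i => (hLup i).inf (hMup i), fun i => ?_, fun i => ?_, fun r hr => ⟨?_, fun i => ?_⟩,
    fun i r hr => ?_⟩
  · simp [hLx, hMx, hxx]
  · simp [hLy, hMy, hyy]
  · exact fun i j hij => inf_le_inf ((hLS r hr).1 i j hij) ((hMS r hr).1 i j hij)
  · simpa [WithBot.coe_min] using ⟨(hLS r hr).2 i, (hMS r hr).2 i⟩
  · simp [hLout i r hr, hMout i r hr]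

lemma sup_mem_omegaAvoidS (hxx : ∀ i, x i ≤ x' i) (hyy : ∀ i, y i ≤ y' i)
    (hL : L ∈ OmegaAvoidS k T₀ T₁ x y g S) (hM : M ∈ OmegaAvoidS k T₀ T₁ x' y' g S) :
    L ⊔ M ∈ OmegaAvoidS k T₀ T₁ x' y' g S := by
  obtain ⟨hLup, hLx, hLy, hLS, hLout⟩ := hL
  obtain ⟨hMup, hMx, hMy, hMS, hMout⟩ := hM
  refine ⟨fun i => (hLup i).sup (hMup i), fun i => ?_, fun i => ?_, fun r hr => ⟨?_, fun i => ?_⟩,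
    fun i r hr => ?_⟩
  · simp [hLx, hMx, hxx]
  · simp [hLy, hMy, hyy]
  · exact fun i j hij => sup_le_sup ((hLS r hr).1 i j hij) ((hMS r hr).1 i j hij)
  · exact (hMS r hr).2 i |>.trans (WithBot.coe_le_coe.2 le_sup_right)
  · simp [hLout i r hr, hMout i r hr]

end OmegaAvoidS

theorem stmt13_general (k : ℕ) (T₀ T₁ : ℤ) (S : Set ℤ)
    (g : ℤ → WithBot ℤ)
    (x y x' y' : Fin k → ℤ)
    (hxx : ∀ i, x i ≤ x' i) (hyy : ∀ i, y i ≤ y' i)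
    (hneb : (OmegaAvoidS k T₀ T₁ x y g S).Nonempty)
    (hnet : (OmegaAvoidS k T₀ T₁ x' y' g S).Nonempty) :
    ∃ (Ω : Type) (mΩ : MeasurableSpace Ω) (P : Measure Ω),
      IsProbabilityMeasure P ∧
      ∃ Lt Lb : Ω → (Fin k → ℤ → ℤ),
        (∀ᵐ ω ∂P, Lt ω ∈ OmegaAvoidS k T₀ T₁ x' y' g S) ∧
        (∀ q ∈ OmegaAvoidS k T₀ T₁ x' y' g S,
          P {ω | Lt ω = q} = ((OmegaAvoidS k T₀ T₁ x' y' g S).ncard : ℝ≥0∞)⁻¹) ∧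
        (∀ᵐ ω ∂P, Lb ω ∈ OmegaAvoidS k T₀ T₁ x y g S) ∧
        (∀ q ∈ OmegaAvoidS k T₀ T₁ x y g S,
          P {ω | Lb ω = q} = ((OmegaAvoidS k T₀ T₁ x y g S).ncard : ℝ≥0∞)⁻¹) ∧
        (∀ᵐ ω ∂P, ∀ (i : Fin k) (r : ℤ), T₀ ≤ r → r ≤ T₁ → Lb ω i r ≤ Lt ω i r) := by
  obtain ⟨Ω, mΩ, P, hP, Lt, Lb, hLt, hLt_law, hLb, hLb_law, hle⟩ :=
    exists_monotone_coupling_uniformOn (omegaAvoidS_finite k T₀ T₁ x y g S)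
      (omegaAvoidS_finite k T₀ T₁ x' y' g S) hneb hnet
      (fun _ hL _ hM => inf_mem_omegaAvoidS hxx hyy hL hM)
      (fun _ hL _ hM => sup_mem_omegaAvoidS hxx hyy hL hM)
  exact ⟨Ω, mΩ, P, hP, Lt, Lb, .of_forall hLt, hLt_law, .of_forall hLb, hLb_law,
    .of_forall fun ω i r _ _ => hle ω i r⟩

/-- monotone coupling of avoiding Bernoulli line ensembles in the
boundary data `x ≤ x'`, `y ≤ y'`. -/
theorem stmt13 (k : ℕ) (T₀ T₁ : ℤ) (hT : T₀ < T₁) (S : Set ℤ)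
    (hS : S ⊆ Set.Icc T₀ T₁)
    (g : ℤ → WithBot ℤ)
    (x y x' y' : Fin k → ℤ)
    (hx : Antitone x) (hy : Antitone y) (hx' : Antitone x') (hy' : Antitone y')
    (hxx : ∀ i, x i ≤ x' i) (hyy : ∀ i, y i ≤ y' i)
    (hneb : (OmegaAvoidS k T₀ T₁ x y g S).Nonempty)
    (hnet : (OmegaAvoidS k T₀ T₁ x' y' g S).Nonempty) :
    ∃ (Ω : Type) (mΩ : MeasurableSpace Ω) (P : Measure Ω),
      IsProbabilityMeasure P ∧
      ∃ Lt Lb : Ω → (Fin k → ℤ → ℤ),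
        (∀ᵐ ω ∂P, Lt ω ∈ OmegaAvoidS k T₀ T₁ x' y' g S) ∧
        (∀ q ∈ OmegaAvoidS k T₀ T₁ x' y' g S,
          P {ω | Lt ω = q} = ((OmegaAvoidS k T₀ T₁ x' y' g S).ncard : ℝ≥0∞)⁻¹) ∧
        (∀ᵐ ω ∂P, Lb ω ∈ OmegaAvoidS k T₀ T₁ x y g S) ∧
        (∀ q ∈ OmegaAvoidS k T₀ T₁ x y g S,
          P {ω | Lb ω = q} = ((OmegaAvoidS k T₀ T₁ x y g S).ncard : ℝ≥0∞)⁻¹) ∧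
        (∀ᵐ ω ∂P, ∀ (i : Fin k) (r : ℤ), T₀ ≤ r → r ≤ T₁ → Lb ω i r ≤ Lt ω i r) :=
  stmt13_general k T₀ T₁ S g x y x' y' hxx hyy hneb hnet
end

section
/- Fix p, t ∈ (0,1), k ∈ ℕ, and a, b ∈ ℝ^k with strictly decreasing entries (a, b ∈ W_k°). With c₁ = 1/(p(1−p)t), c₂ = 1/(p(1−p)(1−t)), c₃ = 1/(2p(1−p)t(1−t)), define H(z) = det[e^{c₁ a_i z_j}]_{i,j=1}^k · det[e^{c₂ b_i z_j}]_{i,j=1}^k · Π_{i=1}^k e^{−c₃ z_i²}. Then the normalizing constant satisfies ∫_{W_k} H(z) dz = (2π)^{k/2} (p(1−p)t(1−t))^{k/2} · exp( (c₁/2) Σ_i a_i² + (c₂/2) Σ_i b_i² ) · det[ e^{−(b_i − a_j)²/(2p(1−p))} ]_{i,j=1}^k. -/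
/-!
Absorbing the Gaussian weight `∏ e^{-c₃ zᵢ²}` into the second determinant turns the integrand
into `det[fᵢ(zⱼ)] · det[gᵢ(zⱼ)]`, a function invariant under permuting the coordinates of `z`.
Its integral over the Weyl chamber is therefore `1/k!` times its integral over `ℝᵏ`, which by
Andréief's identity is `k! · det[∫ fᵢ gⱼ]`. Each entry is a one-dimensional Gaussian integral, and
completing the square, `(c₁α + c₂β)²/(4c₃) = c₁α²/2 + c₂β²/2 − (β − α)²/(2p(1−p))`, splits it
into a row factor, a column factor and the heat kernel `e^{−(β−α)²/(2p(1−p))}`; pulling the row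
and column factors out of the determinant produces the stated prefactor.
-/

open MeasureTheory Real Function Equiv Matrix Finset

namespace Matrix

variable {ι R : Type*} [Fintype ι] [DecidableEq ι] [CommRing R]

theorem det_of_mul_det_of_eq_sum {α : Type*} (f g : ι → α → R) (z : ι → α) :
    det (of fun i j => f i (z j)) * det (of fun i j => g i (z j)) =
      ∑ σ : Perm ι, ∑ τ : Perm ι,
        ((Perm.sign σ : ℤ) : R) * (Perm.sign τ : ℤ) * ∏ j, f (σ j) (z j) * g (τ j) (z j) := by
  simp only [det_apply', sum_mul_sum, of_apply, prod_mul_distrib]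
  refine sum_congr rfl fun σ _ => sum_congr rfl fun τ _ => by ring

theorem sign_mul_sign_self (σ : Perm ι) : ((Perm.sign σ : ℤ) : R) * (Perm.sign σ : ℤ) = 1 := by
  rw [← Int.cast_mul, ← Units.val_mul, Int.units_mul_self, Units.val_one, Int.cast_one]

theorem det_eq_sum_sign_mul_sign_mul_prod (M : Matrix ι ι R) (σ : Perm ι) :
    det M = ∑ τ : Perm ι, ((Perm.sign σ : ℤ) : R) * (Perm.sign τ : ℤ) * ∏ j, M (σ j) (τ j) := by
  have h : det (M.submatrix σ id)ᵀ =
      ∑ τ : Perm ι, ((Perm.sign τ : ℤ) : R) * ∏ j, M (σ j) (τ j) := by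
    simp [det_apply', transpose_apply, submatrix_apply]
  rw [det_transpose, det_permute] at h
  simp_rw [mul_assoc, ← mul_sum, ← h, ← mul_assoc, sign_mul_sign_self, one_mul]

theorem det_of_comp_perm_mul_det_of_comp_perm {α : Type*} (f g : ι → α → R) (σ : Perm ι)
    (z : ι → α) :
    det (of fun i j => f i ((z ∘ σ) j)) * det (of fun i j => g i ((z ∘ σ) j)) =
      det (of fun i j => f i (z j)) * det (of fun i j => g i (z j)) := by
  have hf : of (fun i j => f i ((z ∘ σ) j)) = (of fun i j => f i (z j)).submatrix id σ := rfl
  have hg : of (fun i j => g i ((z ∘ σ) j)) = (of fun i j => g i (z j)).submatrix id σ := rfl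
  rw [hf, hg, det_permute', det_permute', mul_mul_mul_comm, sign_mul_sign_self, one_mul]

theorem det_of_mul_mul (u v : ι → R) (A : ι → ι → R) :
    det (of fun i j => u i * (v j * A i j)) = (∏ i, u i) * (∏ j, v j) * det (of A) := by
  rw [mul_assoc, ← det_mul_row v (of A), ← det_mul_column]
  rfl

end Matrix

section Andreief

variable {ι α 𝕜 : Type*} [Fintype ι] [DecidableEq ι] [RCLike 𝕜] {mα : MeasurableSpace α}
  {μ : Measure α} [SigmaFinite μ] (f g : ι → α → 𝕜)

theorem integrable_det_of_mul_det_of (hfg : ∀ i j, Integrable (fun x => f i x * g j x) μ) :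
    Integrable (fun z : ι → α => det (of fun i j => f i (z j)) * det (of fun i j => g i (z j)))
      (Measure.pi fun _ => μ) := by
  simp_rw [det_of_mul_det_of_eq_sum]
  exact integrable_finsetSum _ fun σ _ => integrable_finsetSum _ fun τ _ =>
    (Integrable.fintype_prod fun j => hfg (σ j) (τ j)).const_mul _

/-- **Andréief's identity**. -/
theorem integral_det_of_mul_det_of (hfg : ∀ i j, Integrable (fun x => f i x * g j x) μ) :
    ∫ z : ι → α, det (of fun i j => f i (z j)) * det (of fun i j => g i (z j))
        ∂(Measure.pi fun _ => μ) =
      (Fintype.card ι).factorial * det (of fun i j => ∫ x, f i x * g j x ∂μ) := by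
  have hprod (σ τ : Perm ι) : Integrable (fun z : ι → α => ∏ j, f (σ j) (z j) * g (τ j) (z j))
      (Measure.pi fun _ => μ) := Integrable.fintype_prod fun j => hfg (σ j) (τ j)
  simp_rw [det_of_mul_det_of_eq_sum]
  rw [integral_finsetSum _ fun σ _ => integrable_finsetSum _ fun τ _ => (hprod σ τ).const_mul _,
    ← Fintype.card_perm, ← nsmul_eq_mul, ← card_univ, ← sum_const]
  refine sum_congr rfl fun σ _ => ?_
  rw [integral_finsetSum _ fun τ _ => (hprod σ τ).const_mul _,
    det_eq_sum_sign_mul_sign_mul_prod _ σ]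
  refine sum_congr rfl fun τ _ => ?_
  rw [integral_const_mul, integral_fintype_prod_eq_prod (fun j x => f (σ j) x * g (τ j) x)]
  rfl

end Andreief

theorem volume_setOf_not_injective {ι : Type*} [Fintype ι] :
    volume {z : ι → ℝ | ¬ Injective z} = 0 := by
  classical
  have hdiag {i j : ι} (hij : i ≠ j) : volume {z : ι → ℝ | z i = z j} = 0 := by
    let L : (ι → ℝ) →ₗ[ℝ] ℝ := LinearMap.proj (R := ℝ) (φ := fun _ : ι => ℝ) i - LinearMap.proj j
    have hL : {z : ι → ℝ | z i = z j} = LinearMap.ker L := by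
      ext z; simp [L, sub_eq_zero]
    refine hL ▸ Measure.addHaar_submodule _ _ fun htop => ?_
    have : Pi.single i (1 : ℝ) ∈ LinearMap.ker L := htop ▸ Submodule.mem_top
    simp [L, Pi.single_eq_of_ne hij.symm] at this
  have hsub : {z : ι → ℝ | ¬ Injective z} ⊆ ⋃ i, ⋃ j, {z | i ≠ j ∧ z i = z j} := by
    intro z hz
    obtain ⟨i, j, hzij, hij⟩ : ∃ i j, z i = z j ∧ i ≠ j := by
      simpa [Injective] using hz
    exact Set.mem_iUnion₂.2 ⟨i, j, hij, hzij⟩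
  refine measure_mono_null hsub (measure_iUnion_null fun i => measure_iUnion_null fun j => ?_)
  by_cases hij : i = j
  · simp [hij]
  · exact measure_mono_null (fun z hz => hz.2) (hdiag hij)

section WeylChamber

variable {k : ℕ}

theorem measurableSet_setOf_strictAnti :
    MeasurableSet {z : Fin k → ℝ | StrictAnti z} := by
  simp only [StrictAnti, Set.ofPred_forall]
  exact .iInter fun i => .iInter fun j => .iInter fun _ =>
    measurableSet_lt (measurable_pi_apply j) (measurable_pi_apply i)

theorem exists_perm_strictAnti_comp {z : Fin k → ℝ} (hz : Injective z) :
    ∃ σ : Perm (Fin k), StrictAnti (z ∘ σ) := by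
  refine ⟨Fin.revPerm.trans (Tuple.sort z), fun i j hij => ?_⟩
  exact ((Tuple.monotone_sort z).strictMono_of_injective (hz.comp (Equiv.injective _)))
    (Fin.rev_lt_rev.2 hij)

theorem pairwise_disjoint_setOf_strictAnti_comp :
    Pairwise (Disjoint on fun σ : Perm (Fin k) => {z : Fin k → ℝ | StrictAnti (z ∘ σ)}) := by
  intro σ τ hne
  refine Set.disjoint_left.2 fun z (hσ : StrictAnti (z ∘ σ)) (hτ : StrictAnti (z ∘ τ)) => hne ?_
  have hz : Injective z := by
    simpa using hσ.injective.comp (σ.symm.injective)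
  have h := Tuple.unique_monotone (f := z) (σ := Fin.revPerm.trans σ) (τ := Fin.revPerm.trans τ)
    (fun i j hij => hσ.antitone (Fin.rev_le_rev.2 hij))
    (fun i j hij => hτ.antitone (Fin.rev_le_rev.2 hij))
  exact Equiv.ext fun i => hz (by simpa using congrFun h (Fin.rev i))

theorem setIntegral_setOf_strictAnti_comp {S : (Fin k → ℝ) → ℝ}
    (hS : ∀ (σ : Perm (Fin k)) z, S (z ∘ σ) = S z) (σ : Perm (Fin k)) :
    ∫ z in {z : Fin k → ℝ | StrictAnti (z ∘ σ)}, S z = ∫ z in {z | StrictAnti z}, S z := by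
  set e := MeasurableEquiv.piCongrLeft (fun _ : Fin k => ℝ) σ.symm with he_def
  have he (z : Fin k → ℝ) : e z = z ∘ σ := by
    ext i
    simpa [he_def, MeasurableEquiv.coe_piCongrLeft] using
      Equiv.piCongrLeft_apply_apply (fun _ : Fin k => ℝ) σ.symm z (σ i)
  have h : ∫ z in e ⁻¹' {z | StrictAnti z}, S (e z) = ∫ z in {z | StrictAnti z}, S z :=
    (volume_measurePreserving_piCongrLeft (fun _ : Fin k => ℝ) σ.symm)
    |>.setIntegral_preimage_emb e.measurableEmbedding S {z | StrictAnti z}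
  have hpre : e ⁻¹' {z | StrictAnti z} = {z | StrictAnti (z ∘ σ)} := by
    ext z; simp [he]
  simpa only [hpre, he, hS] using h

theorem integral_eq_factorial_mul_setIntegral_antitone {S : (Fin k → ℝ) → ℝ}
    (hint : Integrable S) (hS : ∀ (σ : Perm (Fin k)) z, S (z ∘ σ) = S z) :
    ∫ z, S z = k.factorial * ∫ z in {z : Fin k → ℝ | Antitone z}, S z := by
  have hcover : (⋃ σ : Perm (Fin k), {z : Fin k → ℝ | StrictAnti (z ∘ σ)}) =ᵐ[volume]
      (Set.univ : Set (Fin k → ℝ)) := by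
    refine ae_eq_set.2 ⟨by simp, measure_mono_null ?_ volume_setOf_not_injective⟩
    intro z hz hinj
    obtain ⟨σ, hσ⟩ := exists_perm_strictAnti_comp hinj
    exact hz.2 (Set.mem_iUnion.2 ⟨σ, hσ⟩)
  have hchamber : {z : Fin k → ℝ | StrictAnti z} =ᵐ[volume] {z | Antitone z} := by
    refine ae_eq_set.2 ⟨?_, measure_mono_null ?_ volume_setOf_not_injective⟩
    · have hsub : {z : Fin k → ℝ | StrictAnti z} ⊆ {z | Antitone z} := fun z hz => hz.antitone
      rw [Set.sdiff_eq_empty.2 hsub, measure_empty]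
    · exact fun z hz hinj => hz.2 (hz.1.strictAnti_iff_injective.2 hinj)
  rw [← setIntegral_univ, ← setIntegral_congr_set hcover,
    integral_iUnion_fintype (fun σ => ?_) pairwise_disjoint_setOf_strictAnti_comp
      fun _ => hint.integrableOn]
  · simp_rw [setIntegral_setOf_strictAnti_comp hS, setIntegral_congr_set hchamber]
    simp [Fintype.card_perm]
  · exact measurableSet_setOf_strictAnti.preimage (by fun_prop)

end WeylChamber

theorem setIntegral_antitone_det_of_mul_det_of {k : ℕ} (f g : Fin k → ℝ → ℝ)
    (hfg : ∀ i j, Integrable fun x => f i x * g j x) :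
    ∫ z in {z : Fin k → ℝ | Antitone z},
        det (of fun i j => f i (z j)) * det (of fun i j => g i (z j)) =
      det (of fun i j => ∫ x, f i x * g j x) := by
  have h := integral_det_of_mul_det_of f g hfg
  rw [← volume_pi, integral_eq_factorial_mul_setIntegral_antitone
    (integrable_det_of_mul_det_of f g hfg)
    (det_of_comp_perm_mul_det_of_comp_perm f g), Fintype.card_fin] at h
  exact mul_left_cancel₀ (Nat.cast_ne_zero.2 k.factorial_ne_zero) h

theorem exp_mul_mul_exp_neg_mul_sq_mul_exp_mul {c : ℝ} (hc : 0 < c) (d e x : ℝ) :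
    exp (d * x) * (exp (-c * x ^ 2) * exp (e * x)) =
      exp (-c * (x - (d + e) / (2 * c)) ^ 2) * exp ((d + e) ^ 2 / (4 * c)) := by
  simp only [← exp_add]
  congr 1
  field_simp
  ring

theorem integrable_exp_mul_mul_exp_neg_mul_sq_mul_exp_mul {c : ℝ} (hc : 0 < c) (d e : ℝ) :
    Integrable fun x => exp (d * x) * (exp (-c * x ^ 2) * exp (e * x)) := by
  simp_rw [exp_mul_mul_exp_neg_mul_sq_mul_exp_mul hc]
  exact ((integrable_exp_neg_mul_sq hc).comp_sub_right _).mul_const _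

theorem integral_exp_mul_mul_exp_neg_mul_sq_mul_exp_mul {c : ℝ} (hc : 0 < c) (d e : ℝ) :
    ∫ x, exp (d * x) * (exp (-c * x ^ 2) * exp (e * x)) =
      √(π / c) * exp ((d + e) ^ 2 / (4 * c)) := by
  simp_rw [exp_mul_mul_exp_neg_mul_sq_mul_exp_mul hc]
  rw [integral_mul_const, integral_sub_right_eq_self (fun x => exp (-c * x ^ 2)), integral_gaussian]

theorem integral_exp_mul_mul_exp_neg_mul_sq_mul_exp_mul_of_bridge {p t c₁ c₂ c₃ : ℝ}
    (hp : p ∈ Set.Ioo (0 : ℝ) 1) (ht : t ∈ Set.Ioo (0 : ℝ) 1)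
    (hc₁ : c₁ = 1 / (p * (1 - p) * t)) (hc₂ : c₂ = 1 / (p * (1 - p) * (1 - t)))
    (hc₃ : c₃ = 1 / (2 * p * (1 - p) * t * (1 - t))) (α β : ℝ) :
    ∫ x, exp (c₁ * α * x) * (exp (-c₃ * x ^ 2) * exp (c₂ * β * x)) =
      √(π / c₃) * exp (c₁ / 2 * α ^ 2) *
        (exp (c₂ / 2 * β ^ 2) * exp (-(β - α) ^ 2 / (2 * p * (1 - p)))) := by
  have := hp.1; have := ht.1; have := sub_pos.2 hp.2; have := sub_pos.2 ht.2
  have hexponent : (c₁ * α + c₂ * β) ^ 2 / (4 * c₃) =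
      c₁ / 2 * α ^ 2 + c₂ / 2 * β ^ 2 + -(β - α) ^ 2 / (2 * p * (1 - p)) := by
    subst hc₁ hc₂ hc₃
    field_simp
    ring
  rw [integral_exp_mul_mul_exp_neg_mul_sq_mul_exp_mul (by rw [hc₃]; positivity), hexponent,
    exp_add, exp_add]
  ring

theorem sqrt_pi_div_pow_of_bridge {p t c₃ : ℝ} (hp : p ∈ Set.Ioo (0 : ℝ) 1)
    (ht : t ∈ Set.Ioo (0 : ℝ) 1) (hc₃ : c₃ = 1 / (2 * p * (1 - p) * t * (1 - t))) (k : ℕ) :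
    √(π / c₃) ^ k = (2 * π) ^ ((k : ℝ) / 2) * (p * (1 - p) * t * (1 - t)) ^ ((k : ℝ) / 2) := by
  have := hp.1; have := ht.1; have := sub_pos.2 hp.2; have := sub_pos.2 ht.2
  rw [← mul_rpow (by positivity) (by positivity), rpow_div_two_eq_sqrt _ (by positivity),
    rpow_natCast, hc₃]
  congr 2
  field_simp

theorem stmt19_general (p t : ℝ) (hp : p ∈ Set.Ioo (0 : ℝ) 1) (ht : t ∈ Set.Ioo (0 : ℝ) 1)
    (k : ℕ) (a b : Fin k → ℝ)
    (c₁ c₂ c₃ : ℝ)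
    (hc₁ : c₁ = 1 / (p * (1 - p) * t))
    (hc₂ : c₂ = 1 / (p * (1 - p) * (1 - t)))
    (hc₃ : c₃ = 1 / (2 * p * (1 - p) * t * (1 - t))) :
    ∫ z in {z : Fin k → ℝ | Antitone z},
        (Matrix.det (Matrix.of fun i j : Fin k => Real.exp (c₁ * a i * z j))
          * Matrix.det (Matrix.of fun i j : Fin k => Real.exp (c₂ * b i * z j))
          * ∏ i, Real.exp (-c₃ * (z i) ^ 2))
      = (2 * Real.pi) ^ ((k : ℝ) / 2) * (p * (1 - p) * t * (1 - t)) ^ ((k : ℝ) / 2)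
        * Real.exp ((c₁ / 2) * ∑ i, (a i) ^ 2 + (c₂ / 2) * ∑ i, (b i) ^ 2)
        * Matrix.det (Matrix.of fun i j : Fin k =>
            Real.exp (-(b i - a j) ^ 2 / (2 * p * (1 - p)))) := by
  have hc₃pos : 0 < c₃ := by
    have := hp.1; have := ht.1; have := sub_pos.2 hp.2; have := sub_pos.2 ht.2
    rw [hc₃]; positivity
  have hdet (z : Fin k → ℝ) : det (of fun i j => exp (c₂ * b i * z j)) * ∏ i, exp (-c₃ * z i ^ 2) =
      det (of fun i j => exp (-c₃ * z j ^ 2) * exp (c₂ * b i * z j)) := by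
    rw [mul_comm]
    exact (det_mul_row _ (of fun i j => exp (c₂ * b i * z j))).symm
  simp_rw [mul_assoc (det _), hdet]
  rw [setIntegral_antitone_det_of_mul_det_of (fun i x => exp (c₁ * a i * x))
    (fun i x => exp (-c₃ * x ^ 2) * exp (c₂ * b i * x))
    (fun i j => integrable_exp_mul_mul_exp_neg_mul_sq_mul_exp_mul hc₃pos _ _)]
  simp_rw [integral_exp_mul_mul_exp_neg_mul_sq_mul_exp_mul_of_bridge hp ht hc₁ hc₂ hc₃]
  have hK : det (of fun i j => exp (-(b j - a i) ^ 2 / (2 * p * (1 - p)))) =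
      det (of fun i j => exp (-(b i - a j) ^ 2 / (2 * p * (1 - p)))) :=
    det_transpose _
  rw [det_of_mul_mul, hK, prod_mul_distrib, prod_const, card_univ, Fintype.card_fin,
    sqrt_pi_div_pow_of_bridge hp ht hc₃, ← exp_sum, ← exp_sum, ← mul_sum, ← mul_sum, exp_add]
  ring

/-- the normalizing constant of the limiting density of `k` avoiding
Bernoulli bridges with strictly ordered boundary data `a, b ∈ W_k°`:
`∫_{W_k} det[e^{c₁ aᵢ zⱼ}]·det[e^{c₂ bᵢ zⱼ}]·Π e^{−c₃ zᵢ²} dz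
  = (2π)^{k/2} (p(1−p)t(1−t))^{k/2} e^{(c₁/2)Σaᵢ² + (c₂/2)Σbᵢ²}
    · det[e^{−(bᵢ−aⱼ)²/(2p(1−p))}]`. -/
theorem stmt19 (p t : ℝ) (hp : p ∈ Set.Ioo (0 : ℝ) 1) (ht : t ∈ Set.Ioo (0 : ℝ) 1)
    (k : ℕ) (a b : Fin k → ℝ) (ha : StrictAnti a) (hb : StrictAnti b)
    (c₁ c₂ c₃ : ℝ)
    (hc₁ : c₁ = 1 / (p * (1 - p) * t))
    (hc₂ : c₂ = 1 / (p * (1 - p) * (1 - t)))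
    (hc₃ : c₃ = 1 / (2 * p * (1 - p) * t * (1 - t))) :
    ∫ z in {z : Fin k → ℝ | Antitone z},
        (Matrix.det (Matrix.of fun i j : Fin k => Real.exp (c₁ * a i * z j))
          * Matrix.det (Matrix.of fun i j : Fin k => Real.exp (c₂ * b i * z j))
          * ∏ i, Real.exp (-c₃ * (z i) ^ 2))
      = (2 * Real.pi) ^ ((k : ℝ) / 2) * (p * (1 - p) * t * (1 - t)) ^ ((k : ℝ) / 2)
        * Real.exp ((c₁ / 2) * ∑ i, (a i) ^ 2 + (c₂ / 2) * ∑ i, (b i) ^ 2)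
        * Matrix.det (Matrix.of fun i j : Fin k =>
            Real.exp (-(b i - a j) ^ 2 / (2 * p * (1 - p)))) :=
  stmt19_general p t hp ht k a b c₁ c₂ c₃ hc₁ hc₂ hc₃
end
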